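/- Let m be a positive integer or half-integer (2m ∈ ℕ), s ∈ (1/2)ℤ, and n a positive integer. Let τ lie in the upper half-plane and z₁, z₂ ∈ ℂ with z₁ ∉ ℤ + ℤτ. Then for either choice of sign: (1) Φ₁^{(±)[m,s+n]}(τ, z₁, z₂) = Φ₁^{(±)[m,s]}(τ, z₁, z₂) − ∑_{j=0}^{n−1} e^{πi(s+j)(z₁−z₂)} q^{−(s+j)²/(4m)} θ^{(±)}_{s+j,m}(τ, z₁+z₂); and (2) Φ₁^{(±)[m,s−n]}(τ, z₁, z₂) = Φ₁^{(±)[m,s]}(τ, z₁, z₂) + ∑_{j=1}^{n} e^{πi(s−j)(z₁−z₂)} q^{−(s−j)²/(4m)} θ^{(±)}_{s−j,m}(τ, z₁+z₂). -/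

import Mathlib

/-!
Multiplying the numerator of the `j`-th term of `Φ₁^{[m,s]}` by `e^{2πiz₁} q^j` turns it into the
numerator of the `j`-th term of `Φ₁^{[m,s+1]}`, so the difference of the two series has the
denominators `1 - e^{2πiz₁} q^j` cancelled. What remains is a Gaussian series in `j` which, after
completing the square, is `e^{πis(z₁-z₂)} q^{-s²/(4m)} θ^{(±)}_{s,m}(τ, z₁+z₂)`. Iterating this
unit shift in `s` up or down gives both identities.
-/

noncomputable section

open Complex

/-- `e2 w = exp (2 π i w)`; with `q = e^{2πiτ}`, the power `q^x` corresponds to `e2 (x * τ)`. -/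
def e2 (w : ℂ) : ℂ := Complex.exp (2 * (Real.pi : ℂ) * Complex.I * w)

/-- Jacobi-type theta function `θ^{(ε)}_{n,m}(τ, z) = ∑_{j∈ℤ} ε^j q^{m(j+n/(2m))²} e^{2πim(j+n/(2m))z}`. -/
def jtheta (ε n m τ z : ℂ) : ℂ :=
  ∑' j : ℤ, ε ^ j *
    e2 (m * ((j : ℂ) + n / (2 * m)) ^ 2 * τ + m * ((j : ℂ) + n / (2 * m)) * z)

/-- Mock theta function `Φ₁^{(ε)[m,s]}(τ, z₁, z₂)`. -/
def Phi1 (ε m s τ z₁ z₂ : ℂ) : ℂ :=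
  ∑' j : ℤ, ε ^ j *
    e2 (m * (j : ℂ) * (z₁ + z₂) + s * z₁ + (m * (j : ℂ) ^ 2 + s * (j : ℂ)) * τ) /
      (1 - e2 (z₁ + (j : ℂ) * τ))

/-- Dedekind eta function `η(τ) = q^{1/24} ∏_{k≥1} (1 - q^k)`. -/
def dedekindEta (τ : ℂ) : ℂ := e2 (τ / 24) * ∏' k : ℕ, (1 - e2 (((k : ℂ) + 1) * τ))

/-- Jacobi theta `ϑ₁₁(τ, z) = i ∑_{j∈ℤ} (−1)^j q^{(j+1/2)²/2} e^{2πi(j+1/2)z}`. -/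
def theta11 (τ z : ℂ) : ℂ :=
  Complex.I * ∑' j : ℤ, (-1 : ℂ) ^ j *
    e2 (((j : ℂ) + 1 / 2) ^ 2 / 2 * τ + ((j : ℂ) + 1 / 2) * z)

/-- Indefinite double sum `(∑_{j,p∈ℤ, 0<p≤j} − ∑_{j,p∈ℤ, j<p≤0}) f j p`. -/
def indefSum (f : ℤ → ℤ → ℂ) : ℂ :=
  ∑' jp : ℤ × ℤ,
    ((if 0 < jp.2 ∧ jp.2 ≤ jp.1 then f jp.1 jp.2 else 0) -
      (if jp.1 < jp.2 ∧ jp.2 ≤ 0 then f jp.1 jp.2 else 0))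

/-- `g^{[m]}_{n,ν}(τ)`. -/
def gfun (m : ℂ) (n ν : ℤ) (τ : ℂ) : ℂ :=
  indefSum fun j p =>
    (-1 : ℂ) ^ j *
      e2 (((m + 1 / 2) * ((j : ℂ) + (ν : ℂ) - ((ν : ℂ) + 1 / 2) / (2 * m + 1)) ^ 2 -
        m * ((p : ℂ) + (ν : ℂ) - (n : ℂ) / (2 * m)) ^ 2) * τ)

/-- `h^{[m]}_{n,ν}(τ, z)`. -/
def hfun (m : ℂ) (n ν : ℤ) (τ z : ℂ) : ℂ :=
  ∑' j : ℤ,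
    e2 (m * (j : ℂ) * z + (n : ℂ) * z / 2 +
        (m * (j : ℂ) ^ 2 + (n : ℂ) * ((j : ℂ) + (ν : ℂ))) * τ) /
      (1 - e2 (m * z + 2 * m * ((j : ℂ) + (ν : ℂ)) * τ))

/-- `G^{[m]}_{n,ν}(τ, z)`. -/
def Gfun (m : ℂ) (n ν : ℤ) (τ z : ℂ) : ℂ :=
  gfun m n ν τ * jtheta 1 (n : ℂ) m τ z +
    (-1 : ℂ) ^ ν * e2 (-(m * (ν : ℂ) ^ 2) * τ) *
      jtheta (-1) ((ν : ℂ) + 1 / 2) (m + 1 / 2) τ 0 * hfun m n ν τ z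

/-- `F^{[m](a,b)}_{n,ν}(τ, z)`. -/
def Ffun (m : ℂ) (a b n ν : ℤ) (τ z : ℂ) : ℂ :=
  e2 ((a : ℂ) * z / 2 + (a : ℂ) ^ 2 / (4 * m) * τ) *
    Gfun m n ν τ (z + (a : ℂ) * τ / m + (b : ℂ) / m)

/-- The coefficient `f_{j,k}` of Lemma 3.1:
`f_{j,k} = (−1)^j q^{(m+1/2)(j+s/(2m+1))² − k²/(4m)} e^{−2πijm(z₁−z₂)+πik(z₁−z₂)}`. -/
def fcoef (m s τ z₁ z₂ : ℂ) (j k : ℤ) : ℂ :=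
  (-1 : ℂ) ^ j *
    e2 (((m + 1 / 2) * ((j : ℂ) + s / (2 * m + 1)) ^ 2 - (k : ℂ) ^ 2 / (4 * m)) * τ +
      (-((j : ℂ) * m) + (k : ℂ) / 2) * (z₁ - z₂))

open Filter

lemma e2_add (a b : ℂ) : e2 (a + b) = e2 a * e2 b := by
  simp [e2, mul_add, Complex.exp_add]

lemma e2_eq_one_iff {w : ℂ} : e2 w = 1 ↔ ∃ k : ℤ, w = k := by
  have h2πI : 2 * (Real.pi : ℂ) * Complex.I ≠ 0 := by simp [Real.pi_ne_zero]
  rw [e2, Complex.exp_eq_one_iff]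
  refine exists_congr fun k => ⟨fun h => mul_left_cancel₀ h2πI ?_, fun h => ?_⟩
  · linear_combination h
  · rw [h]; ring

lemma norm_e2 (w : ℂ) : ‖e2 w‖ = Real.exp (-(2 * Real.pi * w.im)) := by
  rw [e2, Complex.norm_exp]
  simp

lemma summable_e2_quadratic {a : ℂ} (ha : 0 < a.im) (b c : ℂ) :
    Summable fun j : ℤ => e2 (a * (j : ℂ) ^ 2 + b * j + c) := by
  have hterm : ∀ j : ℤ,
      e2 (a * (j : ℂ) ^ 2 + b * j + c) = e2 c * jacobiTheta₂_term j b (2 * a) := by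
    intro j
    rw [e2, e2, jacobiTheta₂_term, ← Complex.exp_add]
    congr 1
    ring
  have h2a : 0 < (2 * a).im := by simpa using ha
  simpa only [hterm] using ((summable_jacobiTheta₂_term_iff b (2 * a)).mpr h2a).mul_left (e2 c)

lemma Summable.zpow_mul {ε : ℂ} (hε : ‖ε‖ = 1) {f : ℤ → ℂ} (hf : Summable f) :
    Summable fun j : ℤ => ε ^ j * f j := by
  rw [← summable_norm_iff] at hf ⊢
  simpa [norm_zpow, hε] using hf

lemma one_sub_e2_add_int_mul_ne_zero {τ z : ℂ} (hz : ∀ a b : ℤ, z ≠ a + b * τ) (j : ℤ) :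
    1 - e2 (z + j * τ) ≠ 0 := by
  rw [sub_ne_zero, ne_comm, Ne, e2_eq_one_iff]
  rintro ⟨k, hk⟩
  exact hz k (-j) (by push_cast; linear_combination hk)

lemma eventually_half_le_norm_one_sub_e2 {τ : ℂ} (hτ : 0 < τ.im) (z : ℂ) :
    ∀ᶠ j : ℤ in cofinite, 1 / 2 ≤ ‖1 - e2 (z + j * τ)‖ := by
  have hnorm : ∀ j : ℤ, ‖e2 (z + j * τ)‖
      = Real.exp (-(2 * Real.pi * z.im) + -(2 * Real.pi * τ.im) * j) := by
    intro j
    rw [norm_e2]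
    simp only [Complex.add_im, Complex.mul_im, Complex.intCast_re, Complex.intCast_im, zero_mul,
      add_zero, Real.exp_eq_exp]
    ring
  have hslope : -(2 * Real.pi * τ.im) < 0 := by nlinarith [Real.pi_pos]
  rw [Int.cofinite_eq, eventually_sup]
  constructor
  · have hbig : Tendsto (fun j : ℤ => ‖e2 (z + j * τ)‖) atBot atTop := by
      simp only [hnorm]
      exact Real.tendsto_exp_atTop.comp <| tendsto_atTop_add_const_left _ _ <|
        (tendsto_intCast_atBot_iff.mpr tendsto_id).const_mul_atBot_of_neg hslope
    filter_upwards [hbig.eventually_ge_atTop (3 / 2)] with j hj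
    have := norm_sub_norm_le (e2 (z + j * τ)) 1
    rw [norm_one] at this
    rw [norm_sub_rev]
    linarith
  · have hsmall : Tendsto (fun j : ℤ => ‖e2 (z + j * τ)‖) atTop (nhds 0) := by
      simp only [hnorm]
      exact Real.tendsto_exp_atBot.comp <| tendsto_atBot_add_const_left _ _ <|
        tendsto_intCast_atTop_atTop.const_mul_atTop_of_neg hslope
    filter_upwards [hsmall.eventually_le_const (by norm_num : (0 : ℝ) < 1 / 2)] with j hj
    have := norm_sub_norm_le (1 : ℂ) (e2 (z + j * τ))
    rw [norm_one] at this
    linarith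

lemma Summable.div_one_sub_e2 {τ : ℂ} (hτ : 0 < τ.im) (z : ℂ) {f : ℤ → ℂ} (hf : Summable f) :
    Summable fun j : ℤ => f j / (1 - e2 (z + j * τ)) := by
  refine Summable.of_norm_bounded_eventually ((summable_norm_iff.mpr hf).mul_left 2) ?_
  filter_upwards [eventually_half_le_norm_one_sub_e2 hτ z] with j hj
  rw [norm_div, div_le_iff₀ (by linarith)]
  nlinarith [norm_nonneg (f j)]

section Phi1

variable {ε m τ z₁ : ℂ} (hε : ‖ε‖ = 1) (hmτ : 0 < (m * τ).im) (hτ : 0 < τ.im)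
  (hz : ∀ a b : ℤ, z₁ ≠ a + b * τ)

include hε hmτ hτ in
lemma summable_Phi1_term (s z₂ : ℂ) :
    Summable fun j : ℤ => ε ^ j *
      e2 (m * (j : ℂ) * (z₁ + z₂) + s * z₁ + (m * (j : ℂ) ^ 2 + s * j) * τ) /
        (1 - e2 (z₁ + j * τ)) := by
  refine ((summable_e2_quadratic hmτ (m * (z₁ + z₂) + s * τ) (s * z₁)).zpow_mul hε
    |>.div_one_sub_e2 hτ z₁).congr fun j => ?_
  congr 3
  ring

include hε hmτ hτ hz in
lemma Phi1_sub_Phi1_add_one (s z₂ : ℂ) :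
    Phi1 ε m s τ z₁ z₂ - Phi1 ε m (s + 1) τ z₁ z₂ =
      e2 (s * (z₁ - z₂) / 2) * e2 (-(s ^ 2 / (4 * m)) * τ) * jtheta ε s m τ (z₁ + z₂) := by
  have hm : m ≠ 0 := by rintro rfl; simp at hmτ
  rw [Phi1, Phi1, ← (summable_Phi1_term hε hmτ hτ s z₂).tsum_sub
    (summable_Phi1_term hε hmτ hτ (s + 1) z₂), jtheta, ← tsum_mul_left]
  refine tsum_congr fun j => ?_
  have hshift : e2 (m * (j : ℂ) * (z₁ + z₂) + (s + 1) * z₁ + (m * (j : ℂ) ^ 2 + (s + 1) * j) * τ)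
      = e2 (m * (j : ℂ) * (z₁ + z₂) + s * z₁ + (m * (j : ℂ) ^ 2 + s * j) * τ) *
        e2 (z₁ + j * τ) := by
    rw [← e2_add]
    congr 1
    ring
  have hsquare : e2 (s * (z₁ - z₂) / 2) * e2 (-(s ^ 2 / (4 * m)) * τ) *
        e2 (m * ((j : ℂ) + s / (2 * m)) ^ 2 * τ + m * ((j : ℂ) + s / (2 * m)) * (z₁ + z₂))
      = e2 (m * (j : ℂ) * (z₁ + z₂) + s * z₁ + (m * (j : ℂ) ^ 2 + s * j) * τ) := by
    rw [← e2_add, ← e2_add]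
    congr 1
    field_simp
    ring
  have hcancel : ∀ a x : ℂ, 1 - x ≠ 0 → a / (1 - x) - a * x / (1 - x) = a := by
    intro a x hx
    field_simp
  rw [hshift, ← mul_assoc (ε ^ j), hcancel _ _ (one_sub_e2_add_int_mul_ne_zero hz j),
    mul_left_comm, hsquare]

include hε hmτ hτ hz in
lemma Phi1_add_nat (s z₂ : ℂ) (n : ℕ) :
    Phi1 ε m (s + n) τ z₁ z₂ = Phi1 ε m s τ z₁ z₂ -
      ∑ j ∈ Finset.range n, e2 ((s + j) * (z₁ - z₂) / 2) * e2 (-((s + j) ^ 2 / (4 * m)) * τ) *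
        jtheta ε (s + j) m τ (z₁ + z₂) := by
  induction n with
  | zero => simp
  | succ n ih =>
    rw [Finset.sum_range_succ, ← sub_sub, ← ih, ← Phi1_sub_Phi1_add_one hε hmτ hτ hz,
      sub_sub_cancel, Nat.cast_succ, add_assoc]

include hε hmτ hτ hz in
lemma Phi1_sub_nat (s z₂ : ℂ) (n : ℕ) :
    Phi1 ε m (s - n) τ z₁ z₂ = Phi1 ε m s τ z₁ z₂ +
      ∑ j ∈ Finset.Icc 1 n, e2 ((s - j) * (z₁ - z₂) / 2) * e2 (-((s - j) ^ 2 / (4 * m)) * τ) *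
        jtheta ε (s - j) m τ (z₁ + z₂) := by
  induction n with
  | zero => simp
  | succ n ih =>
    have hstep := Phi1_sub_Phi1_add_one hε hmτ hτ hz (s - (n + 1 : ℕ)) z₂
    rw [show s - ((n + 1 : ℕ) : ℂ) + 1 = s - n by push_cast; ring] at hstep
    rw [Finset.sum_Icc_succ_top (by omega), ← add_assoc, ← ih, ← hstep]
    ring

end Phi1

theorem stmt_2_general (M : ℕ) (hM : 0 < M) (m : ℂ) (hm : m = (M : ℂ) / 2)
    (s : ℂ) (n : ℕ)
    (τ : ℂ) (hτ : 0 < τ.im) (z₁ z₂ : ℂ)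
    (hz : ∀ a b : ℤ, z₁ ≠ (a : ℂ) + (b : ℂ) * τ)
    (ε : ℂ) (hε : ε = 1 ∨ ε = -1) :
    (Phi1 ε m (s + (n : ℂ)) τ z₁ z₂ =
      Phi1 ε m s τ z₁ z₂ -
        ∑ j ∈ Finset.range n,
          e2 ((s + (j : ℂ)) * (z₁ - z₂) / 2) * e2 (-((s + (j : ℂ)) ^ 2 / (4 * m)) * τ) *
            jtheta ε (s + (j : ℂ)) m τ (z₁ + z₂)) ∧
    (Phi1 ε m (s - (n : ℂ)) τ z₁ z₂ =
      Phi1 ε m s τ z₁ z₂ +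
        ∑ j ∈ Finset.Icc 1 n,
          e2 ((s - (j : ℂ)) * (z₁ - z₂) / 2) * e2 (-((s - (j : ℂ)) ^ 2 / (4 * m)) * τ) *
            jtheta ε (s - (j : ℂ)) m τ (z₁ + z₂)) := by
  have hε_norm : ‖ε‖ = 1 := by rcases hε with rfl | rfl <;> simp
  have hmτ : 0 < (m * τ).im := by
    subst hm
    have hM' : (0 : ℝ) < M / 2 := by positivity
    simpa [Complex.mul_im] using mul_pos hM' hτ
  exact ⟨Phi1_add_nat hε_norm hmτ hτ hz s z₂ n, Phi1_sub_nat hε_norm hmτ hτ hz s z₂ n⟩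

theorem stmt_2 (M : ℕ) (hM : 0 < M) (m : ℂ) (hm : m = (M : ℂ) / 2)
    (S : ℤ) (s : ℂ) (hs : s = (S : ℂ) / 2) (n : ℕ) (hn : 0 < n)
    (τ : ℂ) (hτ : 0 < τ.im) (z₁ z₂ : ℂ)
    (hz : ∀ a b : ℤ, z₁ ≠ (a : ℂ) + (b : ℂ) * τ)
    (ε : ℂ) (hε : ε = 1 ∨ ε = -1) :
    (Phi1 ε m (s + (n : ℂ)) τ z₁ z₂ =
      Phi1 ε m s τ z₁ z₂ -
        ∑ j ∈ Finset.range n,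
          e2 ((s + (j : ℂ)) * (z₁ - z₂) / 2) * e2 (-((s + (j : ℂ)) ^ 2 / (4 * m)) * τ) *
            jtheta ε (s + (j : ℂ)) m τ (z₁ + z₂)) ∧
    (Phi1 ε m (s - (n : ℂ)) τ z₁ z₂ =
      Phi1 ε m s τ z₁ z₂ +
        ∑ j ∈ Finset.Icc 1 n,
          e2 ((s - (j : ℂ)) * (z₁ - z₂) / 2) * e2 (-((s - (j : ℂ)) ^ 2 / (4 * m)) * τ) *
            jtheta ε (s - (j : ℂ)) m τ (z₁ + z₂)) :=
  stmt_2_general M hM m hm s n τ hτ z₁ z₂ hz ε hε
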